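/- arXiv:1306.1885 — 3 statements merged into one kernel-verified Lean document; each statement's English description precedes it below -/
import Mathlib

section
/- Let d ≥ 1, let B ≠ 0 be a symmetric nonnegative-definite d×d real matrix, and let μ be a probability measure on ℝ^d. Suppose there exist constants a_n ∈ (0,∞) and vectors ξ_n ∈ ℝ^d such that the pushforward of the n-fold convolution power μ^{*n} under the map x ↦ a_n·x − ξ_n converges weakly to N(0,B) as n → ∞. Then the norming sequence (a_n) is regularly varying at ∞ with index −1/2, that is, for every λ > 0, a_{⌊λn⌋}/a_n → λ^{−1/2} as n → ∞. -/
/-!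
Fix `z` with `q = ⟨z, Bz⟩ > 0` and put `ψ s = ‖φ_μ (s • z)‖`, so that the law `ρ n` of
`a n • Sₙ - ξ n` satisfies `‖φ_{ρ n} (t • z)‖ = ψ (a n * t) ^ n`. Weak convergence makes these
converge to `exp (-c² q / 2)` along every `t n → c`, not only for fixed `t`.
With `m = ⌊λ n⌋` and `r n = a m / a n` we get `ψ (a n * r n) ^ n = (ψ (a m) ^ m) ^ (n / m)`,
which tends to `exp (-q / 2) ^ λ⁻¹`; hence every finite limit point `c` of `r` has `c² = λ⁻¹`.
If `r → ∞` along a subsequence, then `ψ (a m * (r n)⁻¹) ^ m = (ψ (a n) ^ n) ^ (m / n)` tends both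
to `φ_N (0) = 1` and to `exp (-q / 2) ^ λ < 1`, which is absurd.
-/

open MeasureTheory Filter Topology Matrix

noncomputable section

abbrev Ed (d : ℕ) := EuclideanSpace ℝ (Fin d)

/-- Characteristic function of a measure on `ℝ^d`. -/
def charFn {d : ℕ} (ν : Measure (Ed d)) (z : Ed d) : ℂ :=
  ∫ x, Complex.exp (((inner ℝ z x : ℝ) : ℂ) * Complex.I) ∂ν

/-- `ν` is the centered Gaussian `N(0,B)`: a probability measure whose characteristic
function is `z ↦ exp(-⟨z, Bz⟩/2)`. -/
def IsGaussianN {d : ℕ} (B : Matrix (Fin d) (Fin d) ℝ) (ν : Measure (Ed d)) : Prop :=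
  IsProbabilityMeasure ν ∧
    ∀ z : Ed d, charFn ν z =
      Complex.exp (-(((∑ i, ∑ j, z i * B i j * z j : ℝ) : ℂ)) / 2)

/-- Weak convergence of measures along a filter. -/
def WeakTendsto {d : ℕ} {ι : Type*} (l : Filter ι) (μs : ι → Measure (Ed d))
    (ν : Measure (Ed d)) : Prop :=
  ∀ g : BoundedContinuousFunction (Ed d) ℝ,
    Tendsto (fun i => ∫ x, g x ∂(μs i)) l (𝓝 (∫ x, g x ∂ν))

/-- `n`-fold convolution power of `μ`. -/
def convPow {d : ℕ} (μ : Measure (Ed d)) (n : ℕ) : Measure (Ed d) :=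
  (Measure.pi (fun _ : Fin n => μ)).map (fun x => ∑ i, x i)

/-- Regular variation of `f` with index `ρ` along the filter `l`
(`l = atTop` for regular variation at `∞`, `l = 𝓝[>] 0` for regular variation at `0`). -/
def RegVar (l : Filter ℝ) (f : ℝ → ℝ) (ρ : ℝ) : Prop :=
  ∀ t > 0, Tendsto (fun x => f (t * x) / f x) l (𝓝 (t ^ ρ))

/-- Matrix regular variation with index `ρ` and limiting matrix `B` along `l`. -/
def MRV {d : ℕ} (l : Filter ℝ) (A : ℝ → Matrix (Fin d) (Fin d) ℝ) (ρ : ℝ)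
    (B : Matrix (Fin d) (Fin d) ℝ) : Prop :=
  (∀ t > 0, 0 < (A t).trace) ∧ RegVar l (fun t => (A t).trace) ρ ∧
    Tendsto (fun t => ((A t).trace)⁻¹ • A t) l (𝓝 B)

/-- `M` is a Lévy measure: it has no atom at `0` and integrates `|x|² ∧ 1`. -/
def IsLevyMeasure {d : ℕ} (M : Measure (Ed d)) : Prop :=
  M {0} = 0 ∧ (∫⁻ x, ENNReal.ofReal (min (‖x‖ ^ 2) 1) ∂M) < ⊤

/-- The cumulant generating function of `ID(0,M,b)`. -/
def levyCGF {d : ℕ} (M : Measure (Ed d)) (b : Ed d) (z : Ed d) : ℂ :=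
  Complex.I * ((inner ℝ b z : ℝ) : ℂ) +
    ∫ x, (Complex.exp (((inner ℝ z x : ℝ) : ℂ) * Complex.I) - 1 -
      Complex.I * ((inner ℝ z x : ℝ) : ℂ) / ((1 + ‖x‖ ^ 2 : ℝ) : ℂ)) ∂M

open BoundedContinuousFunction

open Complex in
lemma norm_cexp_mul_I_sub_cexp_mul_I_le (a b : ℝ) :
    ‖cexp (a * I) - cexp (b * I)‖ ≤ min 2 |a - b| := by
  have hfactor : cexp (a * I) - cexp (b * I) = cexp (b * I) * (cexp (I * (a - b : ℝ)) - 1) := by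
    rw [mul_sub, ← Complex.exp_add, mul_one]; push_cast; ring_nf
  rw [hfactor, norm_mul, Complex.norm_exp_ofReal_mul_I, one_mul]
  refine le_min ?_ Real.norm_exp_I_mul_ofReal_sub_one_le
  calc ‖cexp (I * (a - b : ℝ)) - 1‖ ≤ ‖cexp (I * (a - b : ℝ))‖ + ‖(1 : ℂ)‖ := norm_sub_le _ _
    _ = 2 := by rw [mul_comm, Complex.norm_exp_ofReal_mul_I, norm_one]; norm_num

section NormCutoff

variable {E : Type*} [NormedAddCommGroup E]

def normCutoff (δ : ℝ) : E →ᵇ ℝ :=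
  ofNormedAddCommGroup (fun x => min 2 (|δ| * ‖x‖))
    (continuous_const.min (continuous_const.mul continuous_norm)) 2 fun x => by
      rw [Real.norm_eq_abs, abs_of_nonneg (by positivity)]
      exact min_le_left _ _

lemma normCutoff_apply (δ : ℝ) (x : E) : normCutoff δ x = min 2 (|δ| * ‖x‖) := rfl

lemma normCutoff_mono {δ δ' : ℝ} (h : |δ| ≤ |δ'|) (x : E) : normCutoff δ x ≤ normCutoff δ' x :=
  min_le_min_left _ (mul_le_mul_of_nonneg_right h (norm_nonneg x))

lemma tendsto_integral_normCutoff_zero [MeasurableSpace E] [BorelSpace E] (ν : Measure E)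
    [IsFiniteMeasure ν] : Tendsto (fun δ => ∫ x, normCutoff δ x ∂ν) (𝓝 0) (𝓝 0) := by
  have hlim (x : E) : Tendsto (fun δ => normCutoff δ x) (𝓝 0) (𝓝 0) := by
    have : Continuous fun δ : ℝ => min 2 (|δ| * ‖x‖) := by fun_prop
    simpa [normCutoff_apply] using this.tendsto 0
  have hbound (δ : ℝ) (x : E) : ‖normCutoff δ x‖ ≤ 2 := by
    rw [normCutoff_apply, Real.norm_eq_abs, abs_of_nonneg (by positivity)]
    exact min_le_left _ _
  simpa using tendsto_integral_filter_of_dominated_convergence (fun _ => 2)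
    (.of_forall fun δ => (normCutoff δ).continuous.aestronglyMeasurable)
    (.of_forall fun δ => .of_forall (hbound δ)) (integrable_const 2) (.of_forall hlim)

end NormCutoff

section CharFun

variable {E : Type*} [NormedAddCommGroup E] [InnerProductSpace ℝ E] [MeasurableSpace E]
  [BorelSpace E]

open Complex in
lemma norm_charFun_smul_sub_charFun_smul_le (μ : Measure E) [IsFiniteMeasure μ] (s c : ℝ)
    (t : E) : ‖charFun μ (s • t) - charFun μ (c • t)‖ ≤ ∫ x, normCutoff ((s - c) * ‖t‖) x ∂μ := by
  have hint (u : E) : Integrable (fun x => cexp (inner ℝ x u * I)) μ :=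
    (innerProbChar u).integrable μ
  rw [charFun_apply, charFun_apply, ← integral_sub (hint _) (hint _)]
  refine (norm_integral_le_integral_norm _).trans (integral_mono ((hint _).sub (hint _)).norm
    ((normCutoff _).integrable μ) fun x => ?_)
  refine (norm_cexp_mul_I_sub_cexp_mul_I_le _ _).trans (min_le_min_left _ ?_)
  rw [inner_smul_right, inner_smul_right, ← sub_mul, abs_mul, abs_mul, abs_norm, mul_assoc]
  exact mul_le_mul_of_nonneg_left ((abs_real_inner_le_norm x t).trans_eq (mul_comm _ _))
    (abs_nonneg _)

lemma norm_charFun_map_smul_sub (μ : Measure E) (a : ℝ) (ξ t : E) :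
    ‖charFun (μ.map (fun x => a • x - ξ)) t‖ = ‖charFun μ (a • t)‖ := by
  have : (fun x => a • x - ξ) = (· + -ξ) ∘ (a • ·) := by ext; simp [sub_eq_add_neg]
  rw [this, ← Measure.map_map (by fun_prop) (by fun_prop), charFun_map_add_const,
    charFun_map_smul, norm_mul, Complex.norm_exp_ofReal_mul_I, mul_one]

end CharFun

section ConvPow

variable {d : ℕ}

open Complex in
lemma charFun_convPow (μ : Measure (Ed d)) [SigmaFinite μ] (n : ℕ) (t : Ed d) :
    charFun (convPow μ n) t = charFun μ t ^ n := by
  rw [convPow, charFun_apply, integral_map (by fun_prop) (by fun_prop)]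
  simp_rw [sum_inner, Complex.ofReal_sum, Finset.sum_mul, Complex.exp_sum]
  simpa [charFun_apply] using
    integral_fintype_prod_eq_pow (ι := Fin n) (fun x => cexp (inner ℝ x t * I))

instance (μ : Measure (Ed d)) [IsProbabilityMeasure μ] (n : ℕ) :
    IsProbabilityMeasure (convPow μ n) :=
  Measure.isProbabilityMeasure_map (by fun_prop)

end ConvPow

section WeakConvergence

variable {d : ℕ} {ι : Type*} {l : Filter ι}

lemma WeakTendsto.comp {κ : Type*} {l' : Filter κ} {ρ : ι → Measure (Ed d)} {ν : Measure (Ed d)}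
    (h : WeakTendsto l ρ ν) {ns : κ → ι} (hns : Tendsto ns l' l) :
    WeakTendsto l' (fun k => ρ (ns k)) ν :=
  fun g => (h g).comp hns

variable {ρ : ι → Measure (Ed d)} [∀ n, IsProbabilityMeasure (ρ n)]
  {ν : Measure (Ed d)} [IsProbabilityMeasure ν]

lemma WeakTendsto.tendsto_integral_complex (h : WeakTendsto l ρ ν) (g : Ed d →ᵇ ℂ) :
    Tendsto (fun n => ∫ x, g x ∂ρ n) l (𝓝 (∫ x, g x ∂ν)) := by
  have hP : Tendsto (β := ProbabilityMeasure (Ed d)) (fun n => ⟨ρ n, inferInstance⟩) l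
      (𝓝 ⟨ν, inferInstance⟩) :=
    ProbabilityMeasure.tendsto_iff_forall_integral_tendsto.2 h
  exact (ProbabilityMeasure.tendsto_iff_forall_integral_rclike_tendsto ℂ).1 hP g

lemma WeakTendsto.tendsto_charFun (h : WeakTendsto l ρ ν) (t : Ed d) :
    Tendsto (fun n => charFun (ρ n) t) l (𝓝 (charFun ν t)) := by
  simpa only [charFun_eq_integral_innerProbChar] using h.tendsto_integral_complex (innerProbChar t)

lemma WeakTendsto.tendsto_charFun_smul (h : WeakTendsto l ρ ν) {r : ι → ℝ} {c : ℝ}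
    (hr : Tendsto r l (𝓝 c)) (t : Ed d) :
    Tendsto (fun n => charFun (ρ n) (r n • t)) l (𝓝 (charFun ν (c • t))) := by
  suffices Tendsto (fun n => charFun (ρ n) (r n • t) - charFun (ρ n) (c • t)) l (𝓝 0) by
    simpa using this.add (h.tendsto_charFun (c • t))
  rw [Metric.tendsto_nhds]
  intro ε hε
  obtain ⟨δ, hνδ, hδ⟩ : ∃ δ, ∫ x, normCutoff δ x ∂ν < ε ∧ 0 < δ :=
    ((((tendsto_integral_normCutoff_zero ν).mono_left nhdsWithin_le_nhds).eventually
      (gt_mem_nhds hε)).and (self_mem_nhdsWithin : Set.Ioi (0 : ℝ) ∈ 𝓝[>] 0)).exists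
  have hscale : Tendsto (fun n => (r n - c) * ‖t‖) l (𝓝 0) := by
    simpa using (hr.sub_const c).mul_const ‖t‖
  filter_upwards [Metric.tendsto_nhds.1 hscale δ hδ,
    (h (normCutoff δ)).eventually (gt_mem_nhds hνδ)] with n hn hnε
  rw [Real.dist_0_eq_abs, ← abs_of_pos hδ] at hn
  rw [dist_zero_right]
  calc _ ≤ ∫ x, normCutoff ((r n - c) * ‖t‖) x ∂ρ n :=
        norm_charFun_smul_sub_charFun_smul_le _ _ _ _
    _ ≤ ∫ x, normCutoff δ x ∂ρ n :=
        integral_mono ((normCutoff _).integrable _) ((normCutoff _).integrable _)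
          (normCutoff_mono hn.le)
    _ < ε := hnε

end WeakConvergence

lemma Matrix.PosSemidef.exists_dotProduct_mulVec_pos {n : Type*} [Fintype n]
    {B : Matrix n n ℝ} (hB : B.PosSemidef) (hB0 : B ≠ 0) : ∃ x, 0 < x ⬝ᵥ B *ᵥ x := by
  by_contra! h
  refine hB0 (ext_iff_mulVec.2 fun x => ?_)
  have hx : star x ⬝ᵥ B *ᵥ x = 0 := le_antisymm (h x) (hB.dotProduct_mulVec_nonneg x)
  simpa using (hB.dotProduct_mulVec_zero_iff x).1 hx

section Gaussian

variable {d : ℕ} {B : Matrix (Fin d) (Fin d) ℝ}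

lemma exists_sum_mul_mul_pos (hB : B.PosSemidef) (hB0 : B ≠ 0) :
    ∃ z : Ed d, 0 < ∑ i, ∑ j, z i * B i j * z j := by
  obtain ⟨x, hx⟩ := hB.exists_dotProduct_mulVec_pos hB0
  exact ⟨WithLp.toLp 2 x, by simpa [dotProduct, mulVec, Finset.mul_sum, mul_assoc] using hx⟩

lemma charFn_eq_charFun (ν : Measure (Ed d)) (z : Ed d) : charFn ν z = charFun ν z := by
  simp only [charFn, charFun_apply, real_inner_comm]

lemma IsGaussianN.norm_charFun_smul {ν : Measure (Ed d)} (h : IsGaussianN B ν) (z : Ed d)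
    (c : ℝ) : ‖charFun ν (c • z)‖ = Real.exp (-(c ^ 2 * ∑ i, ∑ j, z i * B i j * z j) / 2) := by
  have hscale : ∑ i, ∑ j, (c • z) i * B i j * (c • z) j
      = c ^ 2 * ∑ i, ∑ j, z i * B i j * z j := by
    simp only [PiLp.smul_apply, smul_eq_mul, Finset.mul_sum]
    exact Finset.sum_congr rfl fun i _ => Finset.sum_congr rfl fun j _ => by ring
  rw [← charFn_eq_charFun, h.2, hscale, ← Complex.norm_exp_ofReal]
  push_cast
  rfl

end Gaussian

lemma tendsto_pow_of_tendsto_pow {α : Type*} {l : Filter α} {x : α → ℝ} (hx : ∀ k, 0 ≤ x k)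
    {m n : α → ℕ} {L s : ℝ} (hL : 0 < L) (hm : ∀ᶠ k in l, m k ≠ 0)
    (hxm : Tendsto (fun k => x k ^ m k) l (𝓝 L))
    (hnm : Tendsto (fun k => (n k : ℝ) / m k) l (𝓝 s)) :
    Tendsto (fun k => x k ^ n k) l (𝓝 (L ^ s)) := by
  refine (hxm.rpow hnm (Or.inl hL.ne')).congr' ?_
  filter_upwards [hm] with k hk
  rw [← Real.rpow_natCast, ← Real.rpow_mul (hx k), mul_div_cancel₀ _ (Nat.cast_ne_zero.2 hk),
    Real.rpow_natCast]

lemma tendsto_of_subseq_tendsto_eq {r : ℕ → ℝ} {ℓ : ℝ} (hr : ∀ n, 0 ≤ r n)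
    (hfin : ∀ ns : ℕ → ℕ, Tendsto ns atTop atTop → ∀ c, Tendsto (r ∘ ns) atTop (𝓝 c) → c = ℓ)
    (hinf : ∀ ns : ℕ → ℕ, Tendsto ns atTop atTop → ¬ Tendsto (r ∘ ns) atTop atTop) :
    Tendsto r atTop (𝓝 ℓ) := by
  refine tendsto_of_subseq_tendsto fun ns hns => ?_
  obtain ⟨y, -, φ, hφ, hy⟩ :=
    isCompact_univ.tendsto_subseq (x := fun k => (r (ns k) : EReal)) fun _ => trivial
  have hnsφ : Tendsto (ns ∘ φ) atTop atTop := hns.comp hφ.tendsto_atTop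
  induction y using EReal.rec with
  | bot =>
    obtain ⟨k, hk⟩ := ((EReal.tendsto_coe_nhds_bot_iff.1 hy).eventually_lt_atBot 0).exists
    exact absurd (hr _) hk.not_ge
  | top => exact absurd (EReal.tendsto_coe_nhds_top_iff.1 hy) (hinf _ hnsφ)
  | coe c =>
    have hc := EReal.tendsto_coe.1 hy
    exact ⟨φ, hfin _ hnsφ c hc ▸ hc⟩

theorem tendsto_floor_mul_div_of_tendsto_pow {ψ : ℝ → ℝ} (hψ : ∀ s, 0 ≤ ψ s) {a : ℕ → ℝ}
    (ha : ∀ n, 0 < a n) {q : ℝ} (hq : 0 < q)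
    (hlim : ∀ ns : ℕ → ℕ, Tendsto ns atTop atTop → ∀ (r : ℕ → ℝ) (c : ℝ),
      Tendsto r atTop (𝓝 c) →
        Tendsto (fun k => ψ (a (ns k) * r k) ^ ns k) atTop (𝓝 (Real.exp (-(c ^ 2 * q) / 2))))
    {lam : ℝ} (hlam : 0 < lam) :
    Tendsto (fun n : ℕ => a ⌊lam * n⌋₊ / a n) atTop (𝓝 (lam ^ (-(1 / 2) : ℝ))) := by
  set m : ℕ → ℕ := fun n => ⌊lam * n⌋₊
  set L := Real.exp (-q / 2)
  have hm : Tendsto m atTop atTop :=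
    tendsto_nat_floor_atTop.comp (tendsto_natCast_atTop_atTop.const_mul_atTop hlam)
  have hmn : Tendsto (fun n : ℕ => (m n : ℝ) / n) atTop (𝓝 lam) :=
    (tendsto_nat_floor_mul_div_atTop hlam.le).comp tendsto_natCast_atTop_atTop
  have hL : Tendsto (fun n => ψ (a n) ^ n) atTop (𝓝 L) := by
    simpa [L] using hlim id tendsto_id (fun _ => 1) 1 tendsto_const_nhds
  have hup : Tendsto (fun n => ψ (a (m n)) ^ n) atTop (𝓝 (L ^ lam⁻¹)) :=
    tendsto_pow_of_tendsto_pow (fun _ => hψ _) (Real.exp_pos _) (hm.eventually_ne_atTop 0)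
      (hL.comp hm) (by simpa using hmn.inv₀ hlam.ne')
  have hdown : Tendsto (fun n => ψ (a n) ^ m n) atTop (𝓝 (L ^ lam)) :=
    tendsto_pow_of_tendsto_pow (fun _ => hψ _) (Real.exp_pos _) (eventually_ne_atTop 0) hL hmn
  refine tendsto_of_subseq_tendsto_eq (fun n => (div_pos (ha _) (ha _)).le)
    (fun ns hns c hc => ?_) (fun ns hns hinf => ?_)
  · have hlimc := hlim ns hns _ c hc
    simp only [Function.comp_apply, mul_div_cancel₀ _ (ha _).ne'] at hlimc
    have hexp := tendsto_nhds_unique hlimc (hup.comp hns)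
    rw [← Real.exp_mul, Real.exp_eq_exp] at hexp
    have hc2 : c ^ 2 = lam⁻¹ := mul_right_cancel₀ hq.ne' (by linarith)
    have hc0 : 0 ≤ c := ge_of_tendsto' hc fun k => (div_pos (ha _) (ha _)).le
    rw [Real.rpow_neg hlam.le, ← Real.sqrt_eq_rpow, ← Real.sqrt_inv, ← hc2, Real.sqrt_sq hc0]
  · have hlim0 := hlim (m ∘ ns) (hm.comp hns) _ 0 (tendsto_inv_atTop_zero.comp hinf)
    simp only [Function.comp_apply, m, inv_div, mul_div_cancel₀ _ (ha _).ne'] at hlim0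
    have hone : L ^ lam = Real.exp (-(0 ^ 2 * q) / 2) :=
      tendsto_nhds_unique (hdown.comp hns) hlim0
    exact (Real.rpow_lt_one (Real.exp_pos _).le (Real.exp_lt_one_iff.2 (by linarith)) hlam).ne
      (hone.trans (by simp))

theorem norming_seq_regularly_varying_general {d : ℕ}
    (B : Matrix (Fin d) (Fin d) ℝ) (hBpsd : B.PosSemidef) (hB0 : B ≠ 0)
    (μ : Measure (Ed d)) [IsProbabilityMeasure μ]
    (a : ℕ → ℝ) (ξ : ℕ → Ed d) (hapos : ∀ n, 0 < a n)
    (hconv : ∃ ν : Measure (Ed d), IsGaussianN B ν ∧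
      WeakTendsto atTop (fun n => (convPow μ n).map (fun x => a n • x - ξ n)) ν) :
    ∀ lam : ℝ, 0 < lam →
      Tendsto (fun n : ℕ => a ⌊lam * n⌋₊ / a n) atTop (𝓝 (lam ^ (-(1 / 2) : ℝ))) := by
  intro lam hlam
  obtain ⟨ν, hν, hweak⟩ := hconv
  have := hν.1
  have (n : ℕ) : IsProbabilityMeasure ((convPow μ n).map (fun x => a n • x - ξ n)) :=
    Measure.isProbabilityMeasure_map (by fun_prop)
  obtain ⟨z, hz⟩ := exists_sum_mul_mul_pos hBpsd hB0
  refine tendsto_floor_mul_div_of_tendsto_pow (ψ := fun s => ‖charFun μ (s • z)‖)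
    (fun _ => norm_nonneg _) hapos hz (fun ns hns r c hr => ?_) hlam
  have hlimit := ((hweak.comp hns).tendsto_charFun_smul hr z).norm
  rw [hν.norm_charFun_smul] at hlimit
  simpa [norm_charFun_map_smul_sub, charFun_convPow, smul_smul] using hlimit

/-- If the shifted and scaled convolution powers of `μ` converge weakly to
`N(0,B)` with `B ≠ 0`, then the norming sequence `(a_n)` is regularly varying at `∞` with
index `-1/2`: for every `λ > 0`, `a ⌊λn⌋ / a n → λ^(-1/2)`. -/
theorem norming_seq_regularly_varying {d : ℕ} (hd : 1 ≤ d)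
    (B : Matrix (Fin d) (Fin d) ℝ) (hBsymm : B.IsSymm) (hBpsd : B.PosSemidef) (hB0 : B ≠ 0)
    (μ : Measure (Ed d)) [IsProbabilityMeasure μ]
    (a : ℕ → ℝ) (ξ : ℕ → Ed d) (hapos : ∀ n, 0 < a n)
    (hconv : ∃ ν : Measure (Ed d), IsGaussianN B ν ∧
      WeakTendsto atTop (fun n => (convPow μ n).map (fun x => a n • x - ξ n)) ν) :
    ∀ lam : ℝ, 0 < lam →
      Tendsto (fun n : ℕ => a ⌊lam * n⌋₊ / a n) atTop (𝓝 (lam ^ (-(1 / 2) : ℝ))) :=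
  norming_seq_regularly_varying_general B hBpsd hB0 μ a ξ hapos hconv

end
end

section
/- Let d ≥ 1 and let M be a Lévy measure on ℝ^d such that the function t ↦ ∫_{|x|≤t} |x|² M(dx) is positive for all t > 0 and slowly varying at ∞ (regularly varying at ∞ with index 0). Then for every η ∈ [0,2), ∫_{|x|>1} |x|^η M(dx) < ∞. -/
open MeasureTheory Filter Topology Matrix

noncomputable section

/-! Slow variation of `U t = ∫_{‖x‖ ≤ t} ‖x‖² dM` gives `U (2x) ≤ c U x` for large `x`, for any fixed
`c > 1`, so `U (2ⁿ)` grows at most like `cⁿ`. On the dyadic shell `2ⁿ ≤ ‖x‖ ≤ 2ⁿ⁺¹` one has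
`‖x‖^η ≤ (2^(η-2))ⁿ ‖x‖²`, so that shell contributes at most `(2^(η-2))ⁿ U (2ⁿ⁺¹)`; choosing
`1 < c < 2^(2-η)` makes the sum over shells a convergent geometric series. -/

open scoped ENNReal

lemma RegVar.eventually_le_mul {f : ℝ → ℝ} {ρ t c : ℝ} (hf : RegVar atTop f ρ)
    (hpos : ∀ᶠ x in atTop, 0 < f x) (ht : 0 < t) (hc : t ^ ρ < c) :
    ∀ᶠ x in atTop, f (t * x) ≤ c * f x := by
  filter_upwards [(hf t ht).eventually (gt_mem_nhds hc), hpos] with x hlt hx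
  exact ((div_lt_iff₀ hx).1 hlt).le

lemma Monotone.exists_le_pow_mul_of_eventually_le_mul {V : ℝ → ℝ≥0∞} (hV : Monotone V)
    {b : ℝ} {c : ℝ≥0∞} (hb : 1 < b) (hc : 1 ≤ c) (h : ∀ᶠ x in atTop, V (b * x) ≤ c * V x) :
    ∃ k : ℕ, ∀ n : ℕ, V (b ^ n) ≤ c ^ n * V (b ^ k) := by
  obtain ⟨A, hA⟩ := eventually_atTop.1 h
  obtain ⟨k, hk⟩ := pow_unbounded_of_one_lt A hb
  have hstep : ∀ m : ℕ, V (b ^ (k + m)) ≤ c ^ m * V (b ^ k) := by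
    intro m
    induction m with
    | zero => simp
    | succ m ih =>
      have hkm : A ≤ b ^ (k + m) := hk.le.trans (pow_le_pow_right₀ hb.le (by omega))
      calc V (b ^ (k + (m + 1))) = V (b * b ^ (k + m)) := by rw [← add_assoc, pow_succ']
        _ ≤ c * V (b ^ (k + m)) := hA _ hkm
        _ ≤ c * (c ^ m * V (b ^ k)) := by gcongr
        _ = c ^ (m + 1) * V (b ^ k) := by rw [pow_succ', mul_assoc]
  refine ⟨k, fun n => ?_⟩
  rcases le_or_gt n k with hnk | hkn
  · calc V (b ^ n) ≤ V (b ^ k) := hV (pow_le_pow_right₀ hb.le hnk)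
      _ ≤ c ^ n * V (b ^ k) := le_mul_of_one_le_left' (one_le_pow₀ hc)
  · obtain ⟨m, rfl⟩ := Nat.exists_eq_add_of_lt hkn
    calc V (b ^ (k + m + 1)) ≤ c ^ (m + 1) * V (b ^ k) := hstep (m + 1)
      _ ≤ c ^ (k + m + 1) * V (b ^ k) := mul_le_mul_left (pow_le_pow_right₀ hc (by omega)) _

lemma ENNReal.tsum_pow_mul_lt_top {q c C : ℝ≥0∞} {a : ℕ → ℝ≥0∞} (hqc : q * c < 1)
    (hC : C ≠ ∞) (ha : ∀ n, a n ≤ c ^ n * C) : ∑' n, q ^ n * a n < ∞ := by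
  calc ∑' n, q ^ n * a n ≤ ∑' n, (q * c) ^ n * C := ENNReal.tsum_le_tsum fun n => by
        rw [mul_pow, mul_assoc]
        exact mul_le_mul_right (ha n) _
    _ = (1 - q * c)⁻¹ * C := by rw [ENNReal.tsum_mul_right, ENNReal.tsum_geometric]
    _ < ∞ := ENNReal.mul_lt_top (ENNReal.inv_lt_top.2 (tsub_pos_of_lt hqc)) hC.lt_top

lemma Real.rpow_le_rpow_sub_two_mul_sq {T r η : ℝ} (hT : 0 < T) (hTr : T ≤ r) (hη : η ≤ 2) :
    r ^ η ≤ T ^ (η - 2) * r ^ 2 := by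
  have hr : 0 < r := hT.trans_le hTr
  calc r ^ η = r ^ (η - 2) * r ^ 2 := by
        rw [← Real.rpow_natCast, ← Real.rpow_add hr]
        norm_num
    _ ≤ T ^ (η - 2) * r ^ 2 :=
        mul_le_mul_of_nonneg_right (Real.rpow_le_rpow_of_nonpos hT hTr (by linarith)) (sq_nonneg r)

section Shells

variable {E : Type*} [NormedAddCommGroup E] [MeasurableSpace E] [BorelSpace E] {μ : Measure E}

lemma setLIntegral_norm_rpow_le_of_subset {s : Set E} {T S η : ℝ} (hT : 0 < T) (hη : η ≤ 2)
    (hs : s ⊆ {x | T ≤ ‖x‖ ∧ ‖x‖ ≤ S}) :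
    ∫⁻ x in s, ENNReal.ofReal (‖x‖ ^ η) ∂μ ≤
      ENNReal.ofReal (T ^ (η - 2)) * ∫⁻ x in {x | ‖x‖ ≤ S}, ENNReal.ofReal (‖x‖ ^ 2) ∂μ := by
  calc ∫⁻ x in s, ENNReal.ofReal (‖x‖ ^ η) ∂μ
      ≤ ∫⁻ x in s, ENNReal.ofReal (T ^ (η - 2)) * ENNReal.ofReal (‖x‖ ^ 2) ∂μ := by
        refine setLIntegral_mono (by fun_prop) fun x hx => ?_
        rw [← ENNReal.ofReal_mul (Real.rpow_nonneg hT.le _)]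
        exact ENNReal.ofReal_le_ofReal (Real.rpow_le_rpow_sub_two_mul_sq hT (hs hx).1 hη)
    _ = ENNReal.ofReal (T ^ (η - 2)) * ∫⁻ x in s, ENNReal.ofReal (‖x‖ ^ 2) ∂μ :=
        lintegral_const_mul _ (by fun_prop)
    _ ≤ _ := by
        gcongr
        exact fun x hx => (hs hx).2

lemma setLIntegral_one_lt_norm_rpow_le_tsum {b η : ℝ} (hb : 1 < b) (hη : η ≤ 2) :
    ∫⁻ x in {x | 1 < ‖x‖}, ENNReal.ofReal (‖x‖ ^ η) ∂μ ≤
      ∑' n : ℕ, ENNReal.ofReal (b ^ (η - 2)) ^ n *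
        ∫⁻ x in {x | ‖x‖ ≤ b ^ (n + 1)}, ENNReal.ofReal (‖x‖ ^ 2) ∂μ := by
  have hcover : {x : E | 1 < ‖x‖} ⊆ ⋃ n : ℕ, {x | b ^ n ≤ ‖x‖ ∧ ‖x‖ ≤ b ^ (n + 1)} := by
    intro x hx
    obtain ⟨n, hn⟩ := exists_nat_pow_near hx.le hb
    exact Set.mem_iUnion.2 ⟨n, hn.1, hn.2.le⟩
  calc ∫⁻ x in {x | 1 < ‖x‖}, ENNReal.ofReal (‖x‖ ^ η) ∂μ
      ≤ ∫⁻ x in ⋃ n : ℕ, {x | b ^ n ≤ ‖x‖ ∧ ‖x‖ ≤ b ^ (n + 1)}, ENNReal.ofReal (‖x‖ ^ η) ∂μ :=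
        lintegral_mono_set hcover
    _ ≤ ∑' n : ℕ, ∫⁻ x in {x | b ^ n ≤ ‖x‖ ∧ ‖x‖ ≤ b ^ (n + 1)}, ENNReal.ofReal (‖x‖ ^ η) ∂μ :=
        lintegral_iUnion_le _ _
    _ ≤ _ := by
        gcongr with n
        rw [← ENNReal.ofReal_pow (Real.rpow_nonneg (by positivity) _),
          Real.rpow_pow_comm (by positivity)]
        exact setLIntegral_norm_rpow_le_of_subset (by positivity) hη subset_rfl

end Shells

theorem levy_measure_eta_moment_finite_of_slowly_varying_general {d : ℕ} (M : Measure (Ed d))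
    (hpos : ∀ t : ℝ, 0 < t → 0 < ∫ x in {x : Ed d | ‖x‖ ≤ t}, ‖x‖ ^ 2 ∂M)
    (hsv : RegVar atTop (fun t => ∫ x in {x : Ed d | ‖x‖ ≤ t}, ‖x‖ ^ 2 ∂M) 0) :
    ∀ η : ℝ, 0 ≤ η → η < 2 →
      (∫⁻ x in {x : Ed d | 1 < ‖x‖}, ENNReal.ofReal (‖x‖ ^ η) ∂M) < ⊤ := by
  intro η _ hη
  set U : ℝ → ℝ := fun t => ∫ x in {x : Ed d | ‖x‖ ≤ t}, ‖x‖ ^ 2 ∂M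
  set V : ℝ → ℝ≥0∞ := fun t => ∫⁻ x in {x : Ed d | ‖x‖ ≤ t}, ENNReal.ofReal (‖x‖ ^ 2) ∂M
  have hVU : ∀ t, 0 < t → V t = ENNReal.ofReal (U t) := fun t ht =>
    (ofReal_integral_eq_lintegral_ofReal (Integrable.of_integral_ne_zero (hpos t ht).ne')
      (ae_of_all _ fun _ => sq_nonneg _)).symm
  have hV : Monotone V := fun s t hst => lintegral_mono_set fun x hx => le_trans hx hst
  set q : ℝ := 2 ^ (η - 2)
  have hq : q < 1 := Real.rpow_lt_one_of_one_lt_of_neg one_lt_two (by linarith)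
  obtain ⟨c, hc1, hcq⟩ : ∃ c : ℝ, 1 < c ∧ c < q⁻¹ :=
    exists_between ((one_lt_inv₀ (by positivity)).2 hq)
  have hdouble : ∀ᶠ x in atTop, V (2 * x) ≤ ENNReal.ofReal c * V x := by
    filter_upwards [hsv.eventually_le_mul ((eventually_gt_atTop 0).mono hpos) two_pos
      (by rwa [Real.rpow_zero]), eventually_gt_atTop 0] with x hx hx0
    rw [hVU _ (by positivity), hVU _ hx0, ← ENNReal.ofReal_mul (by linarith)]
    exact ENNReal.ofReal_le_ofReal hx
  obtain ⟨k, hk⟩ := hV.exists_le_pow_mul_of_eventually_le_mul one_lt_two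
    (ENNReal.one_le_ofReal.2 hc1.le) hdouble
  refine (setLIntegral_one_lt_norm_rpow_le_tsum one_lt_two hη.le).trans_lt
    (ENNReal.tsum_pow_mul_lt_top (c := ENNReal.ofReal c) (C := ENNReal.ofReal c * V (2 ^ k))
      ?_ ?_ fun n => ?_)
  · rw [← ENNReal.ofReal_mul (by positivity), ENNReal.ofReal_lt_one]
    calc q * c < q * q⁻¹ := by gcongr
      _ = 1 := mul_inv_cancel₀ (by positivity)
  · exact ENNReal.mul_ne_top ENNReal.ofReal_ne_top
      (by rw [hVU _ (by positivity)]; exact ENNReal.ofReal_ne_top)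
  · calc V (2 ^ (n + 1)) ≤ ENNReal.ofReal c ^ (n + 1) * V (2 ^ k) := hk (n + 1)
      _ = ENNReal.ofReal c ^ n * (ENNReal.ofReal c * V (2 ^ k)) := by ring

/-- If the truncated second moment function of a Lévy measure `M` is positive
and slowly varying at `∞`, then `∫_{|x|>1} |x|^η dM < ∞` for every `η ∈ [0,2)`. -/
theorem levy_measure_eta_moment_finite_of_slowly_varying {d : ℕ} (hd : 1 ≤ d)
    (M : Measure (Ed d)) (hM : IsLevyMeasure M)
    (hpos : ∀ t : ℝ, 0 < t → 0 < ∫ x in {x : Ed d | ‖x‖ ≤ t}, ‖x‖ ^ 2 ∂M)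
    (hsv : RegVar atTop (fun t => ∫ x in {x : Ed d | ‖x‖ ≤ t}, ‖x‖ ^ 2 ∂M) 0) :
    ∀ η : ℝ, 0 ≤ η → η < 2 →
      (∫⁻ x in {x : Ed d | 1 < ‖x‖}, ENNReal.ofReal (‖x‖ ^ η) ∂M) < ⊤ :=
  levy_measure_eta_moment_finite_of_slowly_varying_general M hpos hsv

end
end

section
/- Let ρ > 0 and let f : (0,∞) → (0,∞) be a Borel function that is regularly varying at 0 with index ρ, i.e. for every t > 0, f(tx)/f(x) → t^ρ as x → 0+. Define f^←(x) = inf{ y > 0 : f(y) > x }. Then f^← is regularly varying at 0 with index 1/ρ, and f^← is an asymptotic inverse of f at 0 in the sense that f(f^←(x))/x → 1 and f^←(f(x))/x → 1 as x → 0+. -/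
open MeasureTheory Filter Topology Matrix

noncomputable section

/-!
Write `f x = x ^ ρ * ℓ x`. Regular variation says that `s ↦ log ℓ (exp (-s))` has increments
tending to `0` at `+∞`. For a measurable function this convergence is uniform on `[0, 1]`: the
increments converge in measure on `[0, 2]`, and translation invariance of Lebesgue measure turns
a single bad increment into two bad sets of total measure at least `1`. Chaining unit steps gives
the Potter-type bound `log ℓ x - log ℓ y = o(1 + |log (x / y)|)` as `x, y → 0+`, hence for
`a, b → 0+` one has `a / b → r > 0` if and only if `f a / f b → r ^ ρ`.

For the generalized inverse `f^←`, the value `x` lies between `f ((1 - x) f^← x)` and `f y` for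
some `y ∈ [f^← x, (1 + x) f^← x)`, so `f (f^← x) ~ x`. The other two limits follow from the
converse direction, applied to the pairs `(f^← (t x), f^← x)` and `(f^← (f x), x)`.
-/

open Real Set Asymptotics
open scoped ENNReal

theorem tendstoInMeasure_of_tendsto_ae_of_isCountablyGenerated {ι α E : Type*} [MeasurableSpace α]
    [PseudoEMetricSpace E] {μ : Measure α} [IsFiniteMeasure μ] {l : Filter ι}
    [l.IsCountablyGenerated] {F : ι → α → E} {g : α → E}
    (hF : ∀ i, AEStronglyMeasurable (F i) μ) (h : ∀ᵐ x ∂μ, Tendsto (fun i => F i x) l (𝓝 (g x))) :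
    TendstoInMeasure μ F l g := fun ε hε =>
  tendsto_iff_seq_tendsto.2 fun u hu =>
    tendstoInMeasure_of_tendsto_ae (fun n => hF (u n)) (h.mono fun _ hx => hx.comp hu) ε hε

theorem tendsto_of_tendsto_log {α : Type*} {l : Filter α} {u : α → ℝ} {r : ℝ}
    (hu : ∀ᶠ i in l, 0 < u i) (hr : 0 < r) (h : Tendsto (fun i => log (u i)) l (𝓝 (log r))) :
    Tendsto u l (𝓝 r) := by
  have := (continuous_exp.tendsto _).comp h
  rw [exp_log hr] at this
  exact this.congr' (hu.mono fun i hi => exp_log hi)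

theorem tendsto_nhdsGT_zero_of_tendsto_div {α : Type*} {l : Filter α} {a b : α → ℝ} {r : ℝ}
    (hb : Tendsto b l (𝓝[>] 0)) (hr : 0 < r) (hab : Tendsto (fun i => a i / b i) l (𝓝 r)) :
    Tendsto a l (𝓝[>] 0) := by
  have hb0 : ∀ᶠ i in l, 0 < b i := hb.eventually self_mem_nhdsWithin
  refine tendsto_nhdsWithin_iff.2 ⟨?_, ?_⟩
  · have := hab.mul (tendsto_nhds_of_tendsto_nhdsWithin hb)
    rw [mul_zero] at this
    exact this.congr' (hb0.mono fun i hi => div_mul_cancel₀ _ hi.ne')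
  · filter_upwards [hb0, hab.eventually (lt_mem_nhds hr)] with i hbi habi
    exact (div_pos_iff_of_pos_right hbi).1 habi

theorem tendsto_div_of_mem_Icc_mul {u v : ℝ → ℝ} (hu : ∀ᶠ x in 𝓝[>] 0, 0 < u x)
    (hv : ∀ᶠ x in 𝓝[>] 0, v x ∈ Icc ((1 - x) * u x) ((1 + x) * u x)) :
    Tendsto (fun x => v x / u x) (𝓝[>] 0) (𝓝 1) := by
  have hid : Tendsto (fun x : ℝ => x) (𝓝[>] 0) (𝓝 0) := tendsto_id.mono_left nhdsWithin_le_nhds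
  refine tendsto_of_tendsto_of_tendsto_of_le_of_le' (by simpa using tendsto_const_nhds.sub hid)
    (by simpa using tendsto_const_nhds.add hid) ?_ ?_
  · filter_upwards [hu, hv] with x hux hvx using (le_div_iff₀ hux).2 hvx.1
  · filter_upwards [hu, hv] with x hux hvx using (div_le_iff₀ hux).2 hvx.2

section UniformConvergence

variable {k : ℝ → ℝ}

theorem eventually_forall_Icc_abs_add_sub_le (hk : Measurable k)
    (h : ∀ c, Tendsto (fun s => k (s + c) - k s) atTop (𝓝 0)) {ε : ℝ} (hε : 0 < ε) :
    ∀ᶠ s in atTop, ∀ c ∈ Icc (0 : ℝ) 1, |k (s + c) - k s| ≤ ε := by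
  set μ := volume.restrict (Icc (0 : ℝ) 2)
  set B : ℝ → Set ℝ := fun s => {r | ENNReal.ofReal (ε / 2) ≤ edist (k (s + r) - k s) 0}
  have hB : ∀ᶠ s in atTop, μ (B s) < 1 / 2 := by
    have hconv : TendstoInMeasure μ (fun s r => k (s + r) - k s) atTop 0 :=
      tendstoInMeasure_of_tendsto_ae_of_isCountablyGenerated
        (fun s => ((hk.comp (measurable_const_add s)).sub_const _).aestronglyMeasurable)
        (ae_of_all _ fun r => h r)
    exact (hconv _ (by positivity)).eventually (gt_mem_nhds (by norm_num))
  obtain ⟨U, hU⟩ := eventually_atTop.1 hB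
  filter_upwards [eventually_ge_atTop U] with s hs c hc
  by_contra! hlt
  have mem_B {s r : ℝ} (h : ε / 2 ≤ |k (s + r) - k s|) : r ∈ B s := by
    simpa [B, edist_dist, Real.dist_eq] using ENNReal.ofReal_le_ofReal h
  -- on `[c, c + 1]` one of the two increments from `s` and from `s + c` is at least `ε / 2`
  have hcover : Icc c (c + 1) ⊆ (B s ∩ Icc 0 2) ∪ (fun r => r - c) ⁻¹' (B (s + c) ∩ Icc 0 2) := by
    rintro r ⟨hcr, hrc⟩
    have hsplit : k (s + c) - k s = (k (s + r) - k s) - (k (s + c + (r - c)) - k (s + c)) := by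
      ring_nf
    by_cases hr : ε / 2 ≤ |k (s + r) - k s|
    · exact .inl ⟨mem_B hr, by linarith [hc.1], by linarith [hc.2]⟩
    · refine .inr ⟨mem_B ?_, by linarith, by linarith⟩
      have := abs_sub (k (s + r) - k s) (k (s + c + (r - c)) - k (s + c))
      rw [← hsplit] at this
      linarith
  have : (1 : ℝ≥0∞) < 1 := calc
    1 = volume (Icc c (c + 1)) := by simp
    _ ≤ μ (B s) + μ (B (s + c)) := by
      rw [Measure.restrict_apply' measurableSet_Icc, Measure.restrict_apply' measurableSet_Icc]
      refine (measure_mono hcover).trans ((measure_union_le _ _).trans_eq ?_)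
      simp only [sub_eq_add_neg, measure_preimage_add_right]
    _ < 1 / 2 + 1 / 2 := ENNReal.add_lt_add (hU s hs) (hU _ (by linarith [hc.1]))
    _ = 1 := ENNReal.add_halves 1
  exact this.false

theorem abs_add_sub_le_of_forall_Icc {U ε : ℝ}
    (h : ∀ s ≥ U, ∀ c ∈ Icc (0 : ℝ) 1, |k (s + c) - k s| ≤ ε) {s c : ℝ} (hs : U ≤ s)
    (hc : 0 ≤ c) : |k (s + c) - k s| ≤ ε * (1 + c) := by
  have hε : 0 ≤ ε := by simpa using h U le_rfl 0 (by simp)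
  have chain : ∀ n : ℕ, ∀ s ≥ U, ∀ c ∈ Icc (0 : ℝ) n, |k (s + c) - k s| ≤ n * ε := by
    intro n
    induction n with
    | zero =>
      intro s _ c hc
      obtain rfl : c = 0 := by simpa using hc
      simp
    | succ n ih =>
      intro s hs c hc
      set c₁ := min c 1
      have hc₁ : c₁ ∈ Icc (0 : ℝ) 1 := ⟨le_min hc.1 zero_le_one, min_le_right _ _⟩
      have hc₂ : c - c₁ ∈ Icc (0 : ℝ) n := by
        have : c - n ≤ c₁ :=
          le_min (by linarith [n.cast_nonneg (α := ℝ)]) (by push_cast at hc; linarith [hc.2])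
        exact ⟨by linarith [min_le_left c 1], by linarith⟩
      calc |k (s + c) - k s|
          ≤ |k (s + c₁ + (c - c₁)) - k (s + c₁)| + |k (s + c₁) - k s| := by
            rw [show s + c₁ + (c - c₁) = s + c by ring]; exact abs_sub_le _ _ _
        _ ≤ n * ε + ε := add_le_add (ih _ (by linarith [hc₁.1]) _ hc₂) (h s hs c₁ hc₁)
        _ = (n + 1 : ℕ) * ε := by push_cast; ring
  calc |k (s + c) - k s| ≤ ⌈c⌉₊ * ε := chain _ s hs c ⟨hc, Nat.le_ceil c⟩
    _ ≤ (1 + c) * ε := by gcongr; linarith [Nat.ceil_lt_add_one hc]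
    _ = ε * (1 + c) := mul_comm _ _

theorem isLittleO_sub_of_tendsto_add_sub (hk : Measurable k)
    (h : ∀ c, Tendsto (fun s => k (s + c) - k s) atTop (𝓝 0)) :
    (fun q : ℝ × ℝ => k q.1 - k q.2) =o[atTop ×ˢ atTop] (fun q => 1 + |q.1 - q.2|) := by
  refine IsLittleO.of_bound fun ε hε => ?_
  obtain ⟨U, hU⟩ := eventually_atTop.1 (eventually_forall_Icc_abs_add_sub_le hk h hε)
  filter_upwards [prod_mem_prod (Ici_mem_atTop U) (Ici_mem_atTop U)] with ⟨s, s'⟩ ⟨hs, hs'⟩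
  rw [Real.norm_eq_abs, Real.norm_of_nonneg (by positivity)]
  rcases le_total s' s with hss' | hss'
  · simpa [abs_of_nonneg (sub_nonneg.2 hss')] using
      abs_add_sub_le_of_forall_Icc hU hs' (sub_nonneg.2 hss') (s := s') (c := s - s')
  · rw [abs_sub_comm, abs_sub_comm s, abs_of_nonneg (sub_nonneg.2 hss')]
    simpa using abs_add_sub_le_of_forall_Icc hU hs (sub_nonneg.2 hss') (s := s) (c := s' - s)

end UniformConvergence

-- `log (f x / x ^ ρ)` in the variable `s = -log x`
def logSlowPart (f : ℝ → ℝ) (ρ s : ℝ) : ℝ := log (f (exp (-s))) + ρ * s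

section RegularVariation

variable {f : ℝ → ℝ} {ρ : ℝ}

theorem tendsto_logSlowPart_add_sub (hpos : ∀ x, 0 < x → 0 < f x)
    (hrv : RegVar (𝓝[>] 0) f ρ) (c : ℝ) :
    Tendsto (fun s => logSlowPart f ρ (s + c) - logSlowPart f ρ s) atTop (𝓝 0) := by
  have hexp : Tendsto (fun s => exp (-s)) atTop (𝓝[>] 0) :=
    tendsto_exp_atBot_nhdsGT.comp tendsto_neg_atTop_atBot
  have := (((hrv _ (exp_pos (-c))).log (rpow_pos_of_pos (exp_pos _) _).ne').comp hexp).add_const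
    (ρ * c)
  rw [log_rpow (exp_pos _), log_exp, mul_neg, neg_add_cancel] at this
  refine this.congr fun s => ?_
  simp only [Function.comp_apply, logSlowPart, ← exp_add, neg_add_rev]
  rw [log_div (hpos _ (exp_pos _)).ne' (hpos _ (exp_pos _)).ne']
  ring

theorem isLittleO_log_div_sub (hmeas : Measurable f) (hpos : ∀ x, 0 < x → 0 < f x)
    (hrv : RegVar (𝓝[>] 0) f ρ) :
    (fun p : ℝ × ℝ => log (f p.1 / f p.2) - ρ * log (p.1 / p.2))
      =o[𝓝[>] 0 ×ˢ 𝓝[>] 0] (fun p => 1 + |log (p.1 / p.2)|) := by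
  have hk : Measurable (logSlowPart f ρ) := by unfold logSlowPart; fun_prop
  have hlog : Tendsto (fun x => -log x) (𝓝[>] 0) atTop :=
    tendsto_neg_atBot_atTop.comp tendsto_log_nhdsGT_zero
  have hpos₂ : ∀ᶠ p : ℝ × ℝ in 𝓝[>] 0 ×ˢ 𝓝[>] 0, 0 < p.1 ∧ 0 < p.2 :=
    prod_mem_prod self_mem_nhdsWithin self_mem_nhdsWithin
  refine ((isLittleO_sub_of_tendsto_add_sub hk (tendsto_logSlowPart_add_sub hpos hrv)).comp_tendsto
    (hlog.prodMap hlog)).congr' ?_ ?_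
  · filter_upwards [hpos₂] with ⟨x, y⟩ ⟨hx, hy⟩
    simp only [Function.comp_apply, Prod.map, logSlowPart, neg_neg, exp_log hx, exp_log hy]
    rw [log_div (hpos x hx).ne' (hpos y hy).ne', log_div hx.ne' hy.ne']
    ring
  · filter_upwards [hpos₂] with ⟨x, y⟩ ⟨hx, hy⟩
    simp only [Function.comp_apply, Prod.map, log_div hx.ne' hy.ne', neg_sub_neg, abs_sub_comm]

theorem tendsto_nhdsGT_zero_of_regVar (hρ : 0 < ρ) (hmeas : Measurable f)
    (hpos : ∀ x, 0 < x → 0 < f x) (hrv : RegVar (𝓝[>] 0) f ρ) :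
    Tendsto f (𝓝[>] 0) (𝓝[>] 0) := by
  obtain ⟨P, hP, Q, hQ, hPQ⟩ :=
    eventually_prod_iff.1 ((isLittleO_log_div_sub hmeas hpos hrv).bound (half_pos hρ))
  obtain ⟨y, hy, hy0⟩ := (hQ.and self_mem_nhdsWithin).exists
  -- below `y`, `log f` lies under a line of slope `ρ / 2` in `log x`
  have hlog : Tendsto (fun x => log (f x)) (𝓝[>] 0) atBot := by
    refine tendsto_atBot_mono' _ ?_ <| tendsto_atBot_add_const_left _ (log (f y) + ρ / 2) <|
      (tendsto_atBot_add_const_right _ (-log y) tendsto_log_nhdsGT_zero).const_mul_atBot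
        (half_pos hρ)
    filter_upwards [hP, Ioo_mem_nhdsGT (show (0 : ℝ) < y from hy0)] with x hx hxy
    have hbound := hPQ hx hy
    have hL : log (x / y) ≤ 0 := log_nonpos (div_pos hxy.1 hy0).le ((div_le_one hy0).2 hxy.2.le)
    rw [log_div (hpos x hxy.1).ne' (hpos y hy0).ne'] at hbound
    rw [log_div hxy.1.ne' hy0.ne'] at hL hbound
    simp only [Real.norm_eq_abs, abs_of_nonpos hL] at hbound
    rw [abs_of_nonneg (show 0 ≤ 1 + -(log x - log y) by linarith)] at hbound
    linarith [(abs_le.1 hbound).2]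
  refine tendsto_nhdsWithin_iff.2 ⟨?_, eventually_nhdsWithin_of_forall hpos⟩
  refine (tendsto_exp_atBot.comp hlog).congr' ?_
  filter_upwards [self_mem_nhdsWithin] with x hx using exp_log (hpos x hx)

variable {α : Type*} {l : Filter α} {a b : α → ℝ}

theorem tendsto_apply_div_apply_of_tendsto_div (hmeas : Measurable f) (hpos : ∀ x, 0 < x → 0 < f x)
    (hrv : RegVar (𝓝[>] 0) f ρ) (ha : Tendsto a l (𝓝[>] 0)) (hb : Tendsto b l (𝓝[>] 0)) {r : ℝ}
    (hr : 0 < r) (hab : Tendsto (fun i => a i / b i) l (𝓝 r)) :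
    Tendsto (fun i => f (a i) / f (b i)) l (𝓝 (r ^ ρ)) := by
  have hE := (isLittleO_log_div_sub hmeas hpos hrv).comp_tendsto (ha.prodMk hb)
  have hL := hab.log hr.ne'
  have hE₀ := (isLittleO_one_iff ℝ).1 <| hE.trans_isBigO <|
    ((hL.abs.const_add 1).isBigO_one ℝ)
  refine tendsto_of_tendsto_log ?_ (rpow_pos_of_pos hr ρ) ?_
  · filter_upwards [ha.eventually self_mem_nhdsWithin, hb.eventually self_mem_nhdsWithin]
      with i hai hbi
    exact div_pos (hpos _ hai) (hpos _ hbi)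
  · rw [log_rpow hr]
    simpa using hE₀.add (hL.const_mul ρ)

theorem tendsto_div_of_tendsto_apply_div_apply (hρ : 0 < ρ) (hmeas : Measurable f)
    (hpos : ∀ x, 0 < x → 0 < f x) (hrv : RegVar (𝓝[>] 0) f ρ) (ha : Tendsto a l (𝓝[>] 0))
    (hb : Tendsto b l (𝓝[>] 0)) {c : ℝ} (hc : 0 < c)
    (hab : Tendsto (fun i => f (a i) / f (b i)) l (𝓝 c)) :
    Tendsto (fun i => a i / b i) l (𝓝 (c ^ (1 / ρ))) := by
  set L := fun i => log (a i / b i)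
  set F := fun i => log (f (a i) / f (b i))
  have hE := (isLittleO_log_div_sub hmeas hpos hrv).comp_tendsto (ha.prodMk hb)
  have hF : Tendsto F l (𝓝 (log c)) := hab.log hc.ne'
  -- the error is at most `ρ / 2 * (1 + |L|)`, so `L` stays bounded while `F` does
  have hL : L =O[l] (fun _ => (1 : ℝ)) := by
    refine IsBigO.of_bound (2 * (|log c| + 1) / ρ + 1) ?_
    filter_upwards [hE.bound (half_pos hρ), hF.abs.eventually (gt_mem_nhds (lt_add_one _))]
      with i hEi hFi
    simp only [Function.comp_apply, Real.norm_eq_abs, norm_one, mul_one] at hEi ⊢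
    rw [abs_of_nonneg (by positivity : 0 ≤ 1 + |L i|)] at hEi
    have hρL : ρ * |L i| ≤ 2 * (|log c| + 1) + ρ := by
      have := abs_sub (F i) (F i - ρ * L i)
      rw [sub_sub_cancel, abs_mul, abs_of_pos hρ] at this
      linarith
    rw [div_add_one hρ.ne', le_div_iff₀ hρ]
    linarith
  have hE₀ := (isLittleO_one_iff ℝ).1 <| hE.trans_isBigO <|
    (isBigO_const_one ℝ 1 l).add (isBigO_abs_left.2 hL)
  refine tendsto_of_tendsto_log ?_ (rpow_pos_of_pos hc _) ?_
  · filter_upwards [ha.eventually self_mem_nhdsWithin, hb.eventually self_mem_nhdsWithin]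
      with i hai hbi
    exact div_pos hai hbi
  · rw [log_rpow hc]
    convert (hF.sub hE₀).div_const ρ using 2 with i
    · simp only [F, Function.comp_apply, sub_sub_cancel]
      field_simp
    · simp [div_eq_inv_mul]

end RegularVariation

-- the paper's `f^←`; when no `y > 0` has `f y > x` this is `sInf ∅ = 0`
def genInv (f : ℝ → ℝ) (x : ℝ) : ℝ := sInf {y | 0 < y ∧ x < f y}

section GeneralizedInverse

variable {f : ℝ → ℝ} {x y : ℝ}

theorem genInv_le (hy : 0 < y) (hxy : x < f y) : genInv f x ≤ y :=
  csInf_le ⟨0, fun _ hz => hz.1.le⟩ ⟨hy, hxy⟩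

theorem le_of_lt_genInv (hy : 0 < y) (h : y < genInv f x) : f y ≤ x :=
  le_of_not_gt fun hxy => (genInv_le hy hxy).not_gt h

theorem exists_genInv_le_lt (hy : 0 < y) (hxy : x < f y) {z : ℝ} (hz : genInv f x < z) :
    ∃ w, genInv f x ≤ w ∧ w < z ∧ x < f w := by
  obtain ⟨w, ⟨hw, hxw⟩, hwz⟩ :=
    exists_lt_of_csInf_lt (s := {y | 0 < y ∧ x < f y}) ⟨y, hy, hxy⟩ hz
  exact ⟨w, genInv_le hw hxw, hwz, hxw⟩

theorem genInv_pos (hf : Tendsto f (𝓝[>] 0) (𝓝 0)) (hx : 0 < x) (hy : 0 < y) (hxy : x < f y) :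
    0 < genInv f x := by
  obtain ⟨η, hη, hηf⟩ := (nhdsGT_basis 0).eventually_iff.1 (hf.eventually (gt_mem_nhds hx))
  refine hη.trans_le (le_csInf ⟨y, hy, hxy⟩ fun z hz => ?_)
  exact le_of_not_gt fun hzη => (hηf ⟨hz.1, hzη⟩).not_gt hz.2

theorem tendsto_genInv (hpos : ∀ x, 0 < x → 0 < f x) (hf : Tendsto f (𝓝[>] 0) (𝓝 0)) :
    Tendsto (genInv f) (𝓝[>] 0) (𝓝[>] 0) := by
  have hpos' : ∀ᶠ x in 𝓝[>] 0, 0 < genInv f x := by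
    filter_upwards [self_mem_nhdsWithin,
      nhdsWithin_le_nhds (eventually_lt_nhds (hpos 1 one_pos))] with x hx hx1
    exact genInv_pos hf hx one_pos hx1
  refine tendsto_nhdsWithin_iff.2
    ⟨tendsto_order.2 ⟨fun a ha => hpos'.mono fun x hx => ha.trans hx, fun a ha => ?_⟩, hpos'⟩
  filter_upwards [nhdsWithin_le_nhds (eventually_lt_nhds (hpos (a / 2) (half_pos ha)))] with x hx
  exact (genInv_le (half_pos ha) hx).trans_lt (half_lt_self ha)

end GeneralizedInverse

section AsymptoticInverse

variable {f : ℝ → ℝ} {ρ : ℝ}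

theorem tendsto_genInv_of_regVar (hρ : 0 < ρ) (hmeas : Measurable f)
    (hpos : ∀ x, 0 < x → 0 < f x) (hrv : RegVar (𝓝[>] 0) f ρ) :
    Tendsto (genInv f) (𝓝[>] 0) (𝓝[>] 0) :=
  tendsto_genInv hpos
    (tendsto_nhds_of_tendsto_nhdsWithin (tendsto_nhdsGT_zero_of_regVar hρ hmeas hpos hrv))

theorem tendsto_apply_genInv_div (hρ : 0 < ρ) (hmeas : Measurable f)
    (hpos : ∀ x, 0 < x → 0 < f x) (hrv : RegVar (𝓝[>] 0) f ρ) :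
    Tendsto (fun x => f (genInv f x) / x) (𝓝[>] 0) (𝓝 1) := by
  set u := genInv f
  have hu : Tendsto u (𝓝[>] 0) (𝓝[>] 0) := tendsto_genInv_of_regVar hρ hmeas hpos hrv
  have hx : ∀ᶠ x in 𝓝[>] 0, 0 < x ∧ x < 1 ∧ x < f 1 ∧ 0 < u x := by
    filter_upwards [Ioo_mem_nhdsGT one_pos, hu.eventually self_mem_nhdsWithin,
      nhdsWithin_le_nhds (eventually_lt_nhds (hpos 1 one_pos))] with x hx hux hx1
    exact ⟨hx.1, hx.2, hx1, hux⟩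
  obtain ⟨y, hy⟩ := skolem.1 <| hx.mono fun x ⟨_, _, hx1, hux⟩ =>
    exists_genInv_le_lt one_pos hx1 (show u x < (1 + x) * u x by nlinarith)
  have hu0 : ∀ᶠ x in 𝓝[>] 0, 0 < u x := hx.mono fun _ h => h.2.2.2
  have hyu := tendsto_div_of_mem_Icc_mul hu0 <| by
    filter_upwards [hx, hy] with x ⟨hx0, _, _, hux⟩ ⟨huy, hyu, _⟩
    exact ⟨by nlinarith, hyu.le⟩
  have hlu := tendsto_div_of_mem_Icc_mul (v := fun x => (1 - x) * u x) hu0 <| by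
    filter_upwards [hx] with x ⟨hx0, _, _, hux⟩
    exact ⟨le_rfl, by nlinarith⟩
  have hup := tendsto_apply_div_apply_of_tendsto_div hmeas hpos hrv
    (tendsto_nhdsGT_zero_of_tendsto_div hu one_pos hyu) hu one_pos hyu
  have hlo := tendsto_apply_div_apply_of_tendsto_div hmeas hpos hrv
    (tendsto_nhdsGT_zero_of_tendsto_div hu one_pos hlu) hu one_pos hlu
  rw [one_rpow] at hup hlo
  have hxu : Tendsto (fun x => x / f (u x)) (𝓝[>] 0) (𝓝 1) := by
    refine tendsto_of_tendsto_of_tendsto_of_le_of_le' hlo hup ?_ ?_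
    · filter_upwards [hx] with x ⟨hx0, hx1, _, hux⟩
      refine div_le_div_of_nonneg_right (le_of_lt_genInv (by positivity) ?_) (hpos _ hux).le
      nlinarith
    · filter_upwards [hx, hy] with x ⟨_, _, _, hux⟩ ⟨_, _, hxy⟩
      exact div_le_div_of_nonneg_right hxy.le (hpos _ hux).le
  simpa using hxu.inv₀ one_ne_zero

theorem tendsto_genInv_apply_div (hρ : 0 < ρ) (hmeas : Measurable f)
    (hpos : ∀ x, 0 < x → 0 < f x) (hrv : RegVar (𝓝[>] 0) f ρ) :
    Tendsto (fun x => genInv f (f x) / x) (𝓝[>] 0) (𝓝 1) := by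
  have hf := tendsto_nhdsGT_zero_of_regVar hρ hmeas hpos hrv
  simpa using tendsto_div_of_tendsto_apply_div_apply hρ hmeas hpos hrv
    ((tendsto_genInv_of_regVar hρ hmeas hpos hrv).comp hf) tendsto_id one_pos
    ((tendsto_apply_genInv_div hρ hmeas hpos hrv).comp hf)

theorem regVar_genInv (hρ : 0 < ρ) (hmeas : Measurable f) (hpos : ∀ x, 0 < x → 0 < f x)
    (hrv : RegVar (𝓝[>] 0) f ρ) : RegVar (𝓝[>] 0) (genInv f) (1 / ρ) := by
  intro t ht
  have hu := tendsto_genInv_of_regVar hρ hmeas hpos hrv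
  have htx : Tendsto (t * ·) (𝓝[>] 0) (𝓝[>] 0) := by
    simpa only [comap_mulLeft_nhdsGT_zero ht] using tendsto_comap (f := (t * ·)) (x := 𝓝[>] 0)
  have hinv := tendsto_apply_genInv_div hρ hmeas hpos hrv
  refine tendsto_div_of_tendsto_apply_div_apply hρ hmeas hpos hrv (hu.comp htx) hu ht ?_
  have := ((hinv.comp htx).mul_const t).div hinv one_ne_zero
  rw [one_mul, div_one] at this
  refine this.congr' ?_
  filter_upwards [self_mem_nhdsWithin] with x (hx : 0 < x)
  simp only [Pi.div_apply, Function.comp_apply]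
  field_simp

end AsymptoticInverse

/-- If `f : (0,∞) → (0,∞)` is Borel and regularly varying at `0` with index
`ρ > 0`, then its generalized inverse `f^←(x) = inf{y > 0 : f(y) > x}` is regularly varying at
`0` with index `1/ρ` and is an asymptotic inverse of `f` at `0`. -/
theorem regvar_at_zero_asymptotic_inverse (ρ : ℝ) (hρ : 0 < ρ)
    (f : ℝ → ℝ) (hmeas : Measurable f) (hpos : ∀ x : ℝ, 0 < x → 0 < f x)
    (hrv : ∀ t : ℝ, 0 < t →
      Tendsto (fun x => f (t * x) / f x) (𝓝[>] (0:ℝ)) (𝓝 (t ^ ρ)))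
    (finv : ℝ → ℝ) (hfinv : ∀ x : ℝ, finv x = sInf {y : ℝ | 0 < y ∧ x < f y}) :
    (∀ t : ℝ, 0 < t →
        Tendsto (fun x => finv (t * x) / finv x) (𝓝[>] (0:ℝ)) (𝓝 (t ^ (1 / ρ)))) ∧
      Tendsto (fun x => f (finv x) / x) (𝓝[>] (0:ℝ)) (𝓝 1) ∧
      Tendsto (fun x => finv (f x) / x) (𝓝[>] (0:ℝ)) (𝓝 1) := by
  obtain rfl : finv = genInv f := funext hfinv
  exact ⟨regVar_genInv hρ hmeas hpos hrv, tendsto_apply_genInv_div hρ hmeas hpos hrv,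
    tendsto_genInv_apply_div hρ hmeas hpos hrv⟩

end
end
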